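/- arXiv:1801.01188 — 10 statements merged into one kernel-verified Lean document; each statement's English description precedes it below -/
import Mathlib

section
/- Let A be a commutative ring, M an A-module with no nonzero I-torsion for an ideal I = (f_1, ..., f_r) of A. Then the map Hom_A(I, M) → M^r sending ψ to (ψ(f_1), ..., ψ(f_r)) is injective, and its image consists exactly of the r-tuples (m_1, ..., m_r) such that f_i m_j = f_j m_i for all i, j. -/
/-!
A homomorphism `I → M` is determined by its values on the generators of `I`, and
`f i • ψ (f j) = ψ (f i * f j) = f j • ψ (f i)` forces the compatibility relations. Conversely,
given compatible `m`, the map `(a_i) ↦ ∑ a_i m_i` on `A^(ι)` vanishes on the relations among the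
`f i`: if `∑ a_i f_i = 0` then `f j • ∑ a_i m_i = (∑ a_i f_i) • m j = 0` for every `j`, so
`∑ a_i m_i` is `I`-torsion, hence zero. It therefore factors through the presentation `A^(ι) ↠ I`.
-/

open Submodule

namespace LinearMap

variable {R F N M : Type*} [Ring R] [AddCommGroup F] [Module R F] [AddCommGroup N] [Module R N]
  [AddCommGroup M] [Module R M]

theorem exists_comp_eq_of_surjective_of_ker_le {π : F →ₗ[R] N} (hπ : Function.Surjective π)
    {g : F →ₗ[R] M} (h : ker π ≤ ker g) : ∃ ψ : N →ₗ[R] M, ψ ∘ₗ π = g :=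
  ⟨(ker π).liftQ g h ∘ₗ (π.quotKerEquivOfSurjective hπ).symm.toLinearMap, by
    ext x
    simp⟩

end LinearMap

namespace Ideal

variable {A M ι : Type*} [CommRing A] [AddCommGroup M] [Module A M] (f : ι → A)

theorem smul_eq_zero_of_mem_span_range {m : M} (hm : ∀ i, f i • m = 0) {x : A}
    (hx : x ∈ span (Set.range f)) : x • m = 0 := by
  rw [← mem_annihilator_span_singleton]
  refine span_le.mpr (Set.range_subset_iff.mpr fun i => ?_) hx
  exact (mem_annihilator_span_singleton _ _).mpr (hm i)

theorem span_range_subtype_mk_eq_top :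
    Submodule.span A
      (Set.range fun i => (⟨f i, subset_span ⟨i, rfl⟩⟩ : span (Set.range f))) = ⊤ := by
  convert span_span_coe_preimage (R := A) (s := Set.range f)
  ext ⟨x, hx⟩
  simp [Subtype.ext_iff]

theorem smul_map_span_range_comm (ψ : span (Set.range f) →ₗ[A] M) (i j : ι) :
    f i • ψ ⟨f j, subset_span ⟨j, rfl⟩⟩ = f j • ψ ⟨f i, subset_span ⟨i, rfl⟩⟩ := by
  rw [← map_smul, ← map_smul]
  congr 1
  ext
  exact mul_comm _ _

theorem exists_map_span_range_eq (hM : ∀ m : M, (∀ i, f i • m = 0) → m = 0) {m : ι → M}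
    (hm : ∀ i j, f i • m j = f j • m i) :
    ∃ ψ : span (Set.range f) →ₗ[A] M, ∀ i, ψ ⟨f i, subset_span ⟨i, rfl⟩⟩ = m i := by
  set π := Finsupp.linearCombination A f
  set g := Finsupp.linearCombination A m
  have hrange : LinearMap.range π = span (Set.range f) := Finsupp.range_linearCombination A
  have hπ (a : ι →₀ A) : π a ∈ span (Set.range f) := hrange ▸ LinearMap.mem_range_self π a
  have hsurj : Function.Surjective (π.codRestrict _ hπ) := by
    rintro ⟨x, hx⟩
    obtain ⟨a, rfl⟩ := hrange.ge hx
    exact ⟨a, rfl⟩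
  have hcompat (j : ι) : f j • g = LinearMap.toSpanSingleton A M (m j) ∘ₗ π :=
    Finsupp.lhom_ext fun i c => by
      simp [g, π, smul_comm (f j) c, hm j i, mul_smul]
  have hker : LinearMap.ker (π.codRestrict _ hπ) ≤ LinearMap.ker g := fun a ha =>
    hM (g a) fun j => by
      have ha' : π a = 0 := congrArg Subtype.val ha
      simpa [ha'] using LinearMap.congr_fun (hcompat j) a
  obtain ⟨ψ, hψ⟩ := LinearMap.exists_comp_eq_of_surjective_of_ker_le hsurj hker
  refine ⟨ψ, fun i => ?_⟩
  have hgen : π.codRestrict _ hπ (Finsupp.single i 1) = ⟨f i, subset_span ⟨i, rfl⟩⟩ :=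
    Subtype.ext (by simp [π])
  simpa [hgen, g] using LinearMap.congr_fun hψ (Finsupp.single i 1)

end Ideal

/-- Let `A` be a commutative ring, `I = (f 1, ..., f r)`, and `M` an `A`-module with no
nonzero `I`-torsion.  Then the map `Hom_A(I, M) → M^r`, `ψ ↦ (ψ (f i))_i`, is injective,
and its image consists exactly of the tuples `(m i)_i` with `f i • m j = f j • m i`. -/
theorem hom_ideal_injective_and_range
    (A : Type*) [CommRing A] (M : Type*) [AddCommGroup M] [Module A M]
    (r : ℕ) (f : Fin r → A)
    (hM : ∀ m : M, (∃ n : ℕ, ∀ x ∈ (Ideal.span (Set.range f)) ^ n, x • m = 0) → m = 0) :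
    Function.Injective
      (fun (ψ : ↥(Ideal.span (Set.range f)) →ₗ[A] M) (i : Fin r) =>
        ψ ⟨f i, Ideal.subset_span ⟨i, rfl⟩⟩) ∧
    Set.range
      (fun (ψ : ↥(Ideal.span (Set.range f)) →ₗ[A] M) (i : Fin r) =>
        ψ ⟨f i, Ideal.subset_span ⟨i, rfl⟩⟩) =
      {m : Fin r → M | ∀ i j, f i • m j = f j • m i} := by
  have hM₁ (m : M) (hm : ∀ i, f i • m = 0) : m = 0 :=
    hM m ⟨1, fun x hx => Ideal.smul_eq_zero_of_mem_span_range f hm (by rwa [pow_one] at hx)⟩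
  refine ⟨fun ψ₁ ψ₂ h => LinearMap.ext_on_range (Ideal.span_range_subtype_mk_eq_top f) (congrFun h),
    Set.ext fun m => ⟨?_, fun hm => ?_⟩⟩
  · rintro ⟨ψ, rfl⟩
    exact Ideal.smul_map_span_range_comm f ψ
  · obtain ⟨ψ, hψ⟩ := Ideal.exists_map_span_range_eq f hM₁ hm
    exact ⟨ψ, funext hψ⟩
end

section
/- Let A be a commutative ring, M an A-module, and I, J finitely generated ideals of A such that M has no nonzero I-torsion. Then there is a natural isomorphism Hom_A(I, Hom_A(J, M)) ≅ Hom_A(IJ, M). -/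
/-! The multiplication map `I ⊗ J → IJ` is surjective and its kernel is killed by `I`, since
`a • t = a ⊗ (image of t in J)` for `a ∈ I`. As `M` has no `I`-torsion, every map `I ⊗ J → M`
vanishes on that kernel, so by left exactness of `Hom(-, M)` composing with the multiplication map
is an isomorphism `Hom(IJ, M) ≃ Hom(I ⊗ J, M) ≃ Hom(I, Hom(J, M))`. -/

open TensorProduct

namespace LinearMap

variable {R M N P : Type*} [CommRing R] [AddCommGroup M] [AddCommGroup N] [AddCommGroup P]
  [Module R M] [Module R N] [Module R P]

theorem lcomp_bijective_of_surjective {f : N →ₗ[R] P} (hf : Function.Surjective f)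
    (hker : ∀ g : N →ₗ[R] M, ker f ≤ ker g) :
    Function.Bijective (lcomp R M f) := by
  refine ⟨lcomp_injective_of_surjective f hf, fun g ↦ ?_⟩
  refine (exact_lcomp_of_exact_of_surjective M (exact_subtype_ker_map f) hf g).mp ?_
  ext ⟨t, ht⟩
  exact hker g ht

end LinearMap

namespace Ideal

variable {R N : Type*} [CommRing R] [AddCommGroup N] [Module R N]

theorem smul_eq_zero_of_lid_rTensor_eq_zero (I : Ideal R) {t : I ⊗[R] N}
    (ht : TensorProduct.lid R N (I.subtype.rTensor N t) = 0) {a : R} (ha : a ∈ I) :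
    a • t = 0 := by
  have hfactor : (a • LinearMap.id : I ⊗[R] N →ₗ[R] I ⊗[R] N) =
      TensorProduct.mk R I N ⟨a, ha⟩ ∘ₗ (TensorProduct.lid R N).toLinearMap ∘ₗ
        I.subtype.rTensor N := by
    refine TensorProduct.ext' fun x y ↦ ?_
    simp only [LinearMap.smul_apply, LinearMap.id_apply, LinearMap.comp_apply,
      LinearMap.rTensor_tmul, Submodule.subtype_apply, LinearEquiv.coe_coe,
      TensorProduct.lid_tmul, TensorProduct.mk_apply, TensorProduct.tmul_smul,
      TensorProduct.smul_tmul']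
    congr 1
    exact Subtype.ext (mul_comm a x)
  simpa [ht] using LinearMap.congr_fun hfactor t

theorem smul_eq_zero_of_mem_ker_mulMap' {I J : Ideal R} {t : I ⊗[R] J}
    (ht : t ∈ LinearMap.ker (Submodule.mulMap' I J)) {a : R} (ha : a ∈ I) : a • t = 0 := by
  refine I.smul_eq_zero_of_lid_rTensor_eq_zero (Subtype.ext ?_) ha
  have hval : ∀ s : I ⊗[R] J, (TensorProduct.lid R J (I.subtype.rTensor J s) : R) =
      Submodule.mulMap' I J s := by
    intro s
    induction s with
    | zero => simp
    | tmul x y => simp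
    | add s₁ s₂ h₁ h₂ => simp [h₁, h₂]
  simpa [hval] using congrArg Subtype.val (LinearMap.mem_ker.mp ht)

end Ideal

theorem hom_hom_equiv_hom_mul_general
    (A : Type*) [CommRing A] (M : Type*) [AddCommGroup M] [Module A M]
    (I J : Ideal A)
    (hM : ∀ m : M, (∃ n : ℕ, ∀ x ∈ I ^ n, x • m = 0) → m = 0) :
    ∃ e : (↥I →ₗ[A] (↥J →ₗ[A] M)) ≃ₗ[A] (↥(I * J) →ₗ[A] M),
      ∀ (ψ : ↥I →ₗ[A] (↥J →ₗ[A] M)) (x : A) (hx : x ∈ I) (y : A) (hy : y ∈ J),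
        e ψ ⟨x * y, Ideal.mul_mem_mul hx hy⟩ = ψ ⟨x, hx⟩ ⟨y, hy⟩ := by
  have hkill : ∀ g : I ⊗[A] J →ₗ[A] M,
      LinearMap.ker (Submodule.mulMap' I J) ≤ LinearMap.ker g := fun g t ht ↦
    hM (g t) ⟨1, fun a ha ↦ by
      rw [← map_smul, Ideal.smul_eq_zero_of_mem_ker_mulMap' ht (by simpa using ha), map_zero]⟩
  let restrict := LinearEquiv.ofBijective _
    (LinearMap.lcomp_bijective_of_surjective (Submodule.mulMap'_surjective I J) hkill)
  exact ⟨(lift.equiv (RingHom.id A) I J M).trans restrict.symm, fun ψ x hx y hy ↦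
    LinearMap.congr_fun (restrict.apply_symm_apply (lift ψ)) ((⟨x, hx⟩ : I) ⊗ₜ (⟨y, hy⟩ : J))⟩

/-- Let `A` be a commutative ring, `M` an `A`-module, and `I`, `J` finitely generated
ideals of `A` such that `M` has no nonzero `I`-torsion.  Then there is a natural
isomorphism `Hom_A(I, Hom_A(J, M)) ≅ Hom_A(IJ, M)`, induced by the multiplication map
(`e ψ (x * y) = ψ x y` for `x ∈ I`, `y ∈ J`). -/
theorem hom_hom_equiv_hom_mul
    (A : Type*) [CommRing A] (M : Type*) [AddCommGroup M] [Module A M]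
    (I J : Ideal A) (hI : I.FG) (hJ : J.FG)
    (hM : ∀ m : M, (∃ n : ℕ, ∀ x ∈ I ^ n, x • m = 0) → m = 0) :
    ∃ e : (↥I →ₗ[A] (↥J →ₗ[A] M)) ≃ₗ[A] (↥(I * J) →ₗ[A] M),
      ∀ (ψ : ↥I →ₗ[A] (↥J →ₗ[A] M)) (x : A) (hx : x ∈ I) (y : A) (hy : y ∈ J),
        e ψ ⟨x * y, Ideal.mul_mem_mul hx hy⟩ = ψ ⟨x, hx⟩ ⟨y, hy⟩ :=
  hom_hom_equiv_hom_mul_general A M I J hM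
end

section
/- Let A be a Φ-local Φ-ring with maximal ideal 𝔫, let S be the multiplicative set of elements of A generating an admissible ideal, and let 𝔪 = ⋂_{s ∈ S} s𝔫. Then S = A ∖ 𝔪, so an ideal of A is admissible if and only if it is generated by an element of A ∖ 𝔪. -/
/-- A ring with constructible supports (a `Φ`-ring): a commutative ring together with a
family of finitely generated ideals (the *admissible* ideals) containing the unit ideal,
stable under products, and such that any finitely generated ideal containing an admissible
ideal is admissible. -/
structure PhiRing (A : Type*) [CommRing A] where
  adm : Set (Ideal A)
  fg_of_mem : ∀ I ∈ adm, I.FG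
  top_mem : ⊤ ∈ adm
  mul_mem : ∀ I ∈ adm, ∀ J ∈ adm, I * J ∈ adm
  enlarge_mem : ∀ I ∈ adm, ∀ J : Ideal A, J.FG → I ≤ J → J ∈ adm

/-- The multiplicative set of elements of `A` generating an admissible ideal. -/
def PhiRing.S {A : Type*} [CommRing A] (Φ : PhiRing A) : Submonoid A where
  carrier := {a : A | Ideal.span {a} ∈ Φ.adm}
  one_mem' := by
    show Ideal.span {(1 : A)} ∈ Φ.adm
    rw [Ideal.span_singleton_one]
    exact Φ.top_mem
  mul_mem' := by
    intro a b ha hb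
    show Ideal.span {a * b} ∈ Φ.adm
    rw [← Ideal.span_singleton_mul_span_singleton]
    exact Φ.mul_mem _ ha _ hb

/-- `A` is `Φ`-local if (it is local and) every admissible ideal is invertible;
in a local ring, an ideal is invertible iff it is generated by a single nonzerodivisor. -/
def PhiRing.IsPhiLocal {A : Type*} [CommRing A] (Φ : PhiRing A) : Prop :=
  ∀ I ∈ Φ.adm, ∃ a ∈ nonZeroDivisors A, I = Ideal.span {a}

/-! In a local ring, `a ∈ a𝔫` forces `a = 0`, so the generator `s` of an admissible ideal never lies
in `s𝔫`, i.e. `S ⊆ A ∖ 𝔪`. Conversely, if `a ∉ s𝔫` for some `s ∈ S`, the admissible ideal `(s, a)`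
is generated by a nonzerodivisor, and cancelling it shows that `(s, a)` is already generated by
`s` or by `a`; in both cases `(a)` is admissible (in the first, `a = ts` with `t ∉ 𝔫` a unit). -/

open Ideal IsLocalRing

namespace IsLocalRing

variable {A : Type*} [CommRing A] [IsLocalRing A]

theorem eq_zero_of_mem_span_singleton_mul_maximalIdeal {a : A}
    (h : a ∈ span {a} * maximalIdeal A) : a = 0 := by
  obtain ⟨n, hn, hna⟩ := mem_span_singleton_mul.mp h
  have hu : IsUnit (1 - n) := isUnit_one_sub_self_of_mem_nonunits n hn
  exact hu.mul_left_eq_zero.mp (by linear_combination -hna)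

theorem span_singleton_eq_of_mem_of_notMem_mul_maximalIdeal {a s : A} (ha : a ∈ span {s})
    (ha' : a ∉ span {s} * maximalIdeal A) : span {a} = span {s} := by
  obtain ⟨t, rfl⟩ := mem_span_singleton.mp ha
  have ht : IsUnit t := by
    by_contra ht
    exact ha' (mem_span_singleton_mul.mpr ⟨t, (mem_maximalIdeal t).mpr ht, rfl⟩)
  exact span_singleton_mul_right_unit ht s

theorem span_pair_eq_left_or_right {x y b : A} (hb : b ∈ nonZeroDivisors A)
    (h : span {x, y} = span {b}) : span {x, y} = span {x} ∨ span {x, y} = span {y} := by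
  obtain ⟨c, rfl⟩ := mem_span_singleton'.mp (h ▸ subset_span (by simp) : x ∈ span {b})
  obtain ⟨d, rfl⟩ := mem_span_singleton'.mp (h ▸ subset_span (by simp) : y ∈ span {b})
  obtain ⟨u, v, huv⟩ := mem_span_pair.mp (h ▸ mem_span_singleton_self b : b ∈ span {c * b, d * b})
  have hone : u * c + v * d = 1 :=
    (mul_cancel_right_mem_nonZeroDivisors hb).mp (by linear_combination huv)
  rw [h]
  rcases isUnit_or_isUnit_of_add_one hone with hc | hd
  · exact .inl (span_singleton_mul_left_unit (isUnit_of_mul_isUnit_right hc) b).symm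
  · exact .inr (span_singleton_mul_left_unit (isUnit_of_mul_isUnit_right hd) b).symm

end IsLocalRing

theorem PhiRing.mem_S {A : Type*} [CommRing A] (Φ : PhiRing A) {a : A} :
    a ∈ Φ.S ↔ span {a} ∈ Φ.adm :=
  Iff.rfl

namespace PhiRing.IsPhiLocal

variable {A : Type*} [CommRing A] {Φ : PhiRing A}

theorem mem_adm_iff (hΦ : Φ.IsPhiLocal) {I : Ideal A} :
    I ∈ Φ.adm ↔ ∃ a ∈ Φ.S, I = span {a} := by
  refine ⟨fun hI => ?_, fun ⟨a, ha, hI⟩ => hI ▸ ha⟩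
  obtain ⟨a, -, rfl⟩ := hΦ I hI
  exact ⟨a, hI, rfl⟩

theorem ne_zero_of_mem_S [Nontrivial A] (hΦ : Φ.IsPhiLocal) {a : A} (ha : a ∈ Φ.S) : a ≠ 0 := by
  rintro rfl
  obtain ⟨b, hb, hspan⟩ := hΦ _ ha
  rw [Set.singleton_zero, span_zero, eq_comm, span_singleton_eq_bot] at hspan
  exact zero_notMem_nonZeroDivisors (hspan ▸ hb)

variable [IsLocalRing A]

theorem notMem_span_singleton_mul_maximalIdeal (hΦ : Φ.IsPhiLocal) {a : A} (ha : a ∈ Φ.S) :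
    a ∉ span {a} * maximalIdeal A :=
  fun h => hΦ.ne_zero_of_mem_S ha (eq_zero_of_mem_span_singleton_mul_maximalIdeal h)

theorem mem_S_of_notMem_span_singleton_mul_maximalIdeal (hΦ : Φ.IsPhiLocal) {s a : A}
    (hs : s ∈ Φ.S) (ha : a ∉ span {s} * maximalIdeal A) : a ∈ Φ.S := by
  have hJ : span {s, a} ∈ Φ.adm :=
    Φ.enlarge_mem (span {s}) hs (span {s, a}) (Submodule.fg_span (Set.toFinite _))
      (span_mono (Set.singleton_subset_iff.mpr (Set.mem_insert s {a})))
  obtain ⟨b, hb, hJb⟩ := hΦ _ hJ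
  rw [PhiRing.mem_S]
  rcases span_pair_eq_left_or_right hb hJb with hJs | hJa
  · have haJ : a ∈ span {s, a} := subset_span (Set.mem_insert_of_mem s rfl)
    rw [hJs] at haJ
    rwa [span_singleton_eq_of_mem_of_notMem_mul_maximalIdeal haJ ha]
  · rwa [← hJa]

end PhiRing.IsPhiLocal

/-- Let `A` be a `Φ`-local `Φ`-ring with maximal ideal `𝔫`, `S` the multiplicative set of
elements generating an admissible ideal, and `𝔪 = ⋂_{s ∈ S} s𝔫`.  Then `S = A ∖ 𝔪`, so an
ideal of `A` is admissible if and only if it is generated by an element of `A ∖ 𝔪`. -/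
theorem PhiRing.S_eq_compl_m
    {A : Type*} [CommRing A] [IsLocalRing A] (Φ : PhiRing A) (hΦ : Φ.IsPhiLocal)
    (𝔪 : Ideal A)
    (h𝔪 : 𝔪 = ⨅ s ∈ Φ.S, Ideal.span {s} * IsLocalRing.maximalIdeal A) :
    (↑Φ.S : Set A) = {a : A | a ∉ 𝔪} ∧
      (∀ I : Ideal A, I ∈ Φ.adm ↔ ∃ a : A, a ∉ 𝔪 ∧ I = Ideal.span {a}) := by
  have hS : ∀ a, a ∈ Φ.S ↔ a ∉ 𝔪 := by
    intro a
    simp only [h𝔪, mem_iInf, not_forall]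
    exact ⟨fun ha => ⟨a, ha, hΦ.notMem_span_singleton_mul_maximalIdeal ha⟩,
      fun ⟨s, hs, ha⟩ => hΦ.mem_S_of_notMem_span_singleton_mul_maximalIdeal hs ha⟩
  refine ⟨Set.ext hS, fun I => ?_⟩
  simp only [hΦ.mem_adm_iff, hS]
end

section
/- Let A be a Φ-local Φ-ring with maximal ideal 𝔫, S the set of elements generating an admissible ideal, 𝔪 = ⋂_{s ∈ S} s𝔫. Then the image of A in S⁻¹A/𝔪(S⁻¹A) is a valuation subring of the residue field of the local ring S⁻¹A: for any a, s ∈ A ∖ 𝔪, either a ∈ sA or s ∈ aA. -/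
/-! If `(a, b) = (c)` with `c = αa + βb`, `a = cx`, `b = cy`, then `c (1 - αx - βy) = 0`; in a local
ring either `αx` or `βy` is a unit, making `a` or `b` a generator, or `c = 0`. Applied to `(a, t)`
with `t ∈ S`, which is admissible and hence principal, this gives `t ∣ a`, or `a ∣ t` with
`(a) = (a, t)` admissible. So every `a ∉ S` is a multiple `t b` of each `t ∈ S`, with `b` a nonunit
since otherwise `(a) = (t)` would be admissible; that is, `a ∈ 𝔪`. Hence `a ∉ 𝔪` puts `a` in `S`,
and the dichotomy with `t = a` compares `a` and `s`. -/

theorem IsLocalRing.dvd_or_dvd_of_isPrincipal_span_pair {A : Type*} [CommRing A] [IsLocalRing A]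
    {a b : A} (h : (Ideal.span {a, b}).IsPrincipal) : a ∣ b ∨ b ∣ a := by
  obtain ⟨c, hc⟩ := h.principal
  replace hc : Ideal.span {a, b} = Ideal.span {c} := hc
  obtain ⟨x, rfl⟩ : c ∣ a :=
    Ideal.mem_span_singleton.mp (hc ▸ Ideal.subset_span (Set.mem_insert a {b}))
  obtain ⟨y, rfl⟩ : c ∣ b :=
    Ideal.mem_span_singleton.mp (hc ▸ Ideal.subset_span (Set.mem_insert_of_mem _ rfl))
  obtain ⟨α, β, hcαβ⟩ := Ideal.mem_span_pair.mp (hc ▸ Ideal.mem_span_singleton_self c)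
  by_cases hunit : IsUnit (α * x + β * y)
  · rcases isUnit_or_isUnit_of_isUnit_add hunit with hx | hy
    · exact .inl ((isUnit_of_mul_isUnit_right hx).mul_right_dvd.mpr (dvd_mul_right c y))
    · exact .inr ((isUnit_of_mul_isUnit_right hy).mul_right_dvd.mpr (dvd_mul_right c x))
  · have hc_mul : c * (1 - (α * x + β * y)) = 0 := by linear_combination -hcαβ
    have hc0 : c = 0 := (isUnit_one_sub_self_of_mem_nonunits _ hunit).mul_left_eq_zero.mp hc_mul
    simp [hc0]

theorem IsLocalRing.mem_span_singleton_mul_maximalIdeal_or_span_singleton_eq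
    {A : Type*} [CommRing A] [IsLocalRing A] {a t : A} (h : t ∣ a) :
    a ∈ Ideal.span {t} * maximalIdeal A ∨ Ideal.span {a} = Ideal.span {t} := by
  obtain ⟨b, rfl⟩ := h
  by_cases hb : IsUnit b
  · exact .inr (Ideal.span_singleton_mul_right_unit hb t)
  · exact .inl (Ideal.mem_span_singleton_mul.mpr ⟨b, hb, rfl⟩)

namespace PhiRing

variable {A : Type*} [CommRing A] (Φ : PhiRing A)

theorem span_pair_mem_adm {t : A} (ht : t ∈ Φ.S) (a : A) : Ideal.span {a, t} ∈ Φ.adm :=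
  Φ.enlarge_mem _ ht _ (Submodule.fg_span (Set.toFinite _))
    (Ideal.span_mono (Set.subset_insert a {t}))

variable {Φ} [IsLocalRing A]

theorem IsPhiLocal.dvd_or_dvd_and_mem_S (hΦ : Φ.IsPhiLocal) {t : A} (ht : t ∈ Φ.S) (a : A) :
    t ∣ a ∨ (a ∣ t ∧ a ∈ Φ.S) := by
  have hadm := Φ.span_pair_mem_adm ht a
  obtain ⟨c, -, hc⟩ := hΦ _ hadm
  refine (IsLocalRing.dvd_or_dvd_of_isPrincipal_span_pair ⟨c, hc⟩).symm.imp_right fun hat => ?_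
  refine ⟨hat, ?_⟩
  change Ideal.span {a} ∈ Φ.adm
  rwa [← Ideal.span_pair_eq_span_left_iff_dvd.mpr hat]

theorem IsPhiLocal.mem_iInf_of_notMem_S (hΦ : Φ.IsPhiLocal) {a : A} (ha : a ∉ Φ.S) :
    a ∈ ⨅ s ∈ Φ.S, Ideal.span {s} * IsLocalRing.maximalIdeal A := by
  simp only [Submodule.mem_iInf]
  intro t ht
  have hta : t ∣ a := (hΦ.dvd_or_dvd_and_mem_S ht a).resolve_right fun h => ha h.2
  refine (IsLocalRing.mem_span_singleton_mul_maximalIdeal_or_span_singleton_eq hta).resolve_right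
    fun heq => ha ?_
  change Ideal.span {a} ∈ Φ.adm
  rwa [heq]

end PhiRing

/-- Let `A` be a `Φ`-local `Φ`-ring with maximal ideal `𝔫`, `S` the set of elements
generating an admissible ideal, and `𝔪 = ⋂_{s ∈ S} s𝔫`.  Then the image of `A` in the
residue field of the local ring `S⁻¹A` is a valuation subring: for any
`a, s ∈ A ∖ 𝔪`, either `a ∈ sA` or `s ∈ aA`. -/
theorem PhiRing.valuation_subring_residue
    {A : Type*} [CommRing A] [IsLocalRing A] (Φ : PhiRing A) (hΦ : Φ.IsPhiLocal)
    (𝔪 : Ideal A)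
    (h𝔪 : 𝔪 = ⨅ s ∈ Φ.S, Ideal.span {s} * IsLocalRing.maximalIdeal A) :
    ∀ a s : A, a ∉ 𝔪 → s ∉ 𝔪 →
      a ∈ Ideal.span ({s} : Set A) ∨ s ∈ Ideal.span ({a} : Set A) := by
  intro a s ha _
  have haS : a ∈ Φ.S := by
    by_contra haS
    exact ha (h𝔪 ▸ hΦ.mem_iInf_of_notMem_S haS)
  simp only [Ideal.mem_span_singleton]
  exact (hΦ.dvd_or_dvd_and_mem_S haS s).symm.imp_left And.left
end

section
/- Let A be a Φ-local Φ-ring with 𝔪 the maximal ideal of A^◁ = S⁻¹A. Let I be a finitely generated ideal of A and g ∈ A such that (I, g) is admissible. Then the image of I in A/𝔪 is contained in the image of gA in A/𝔪 if and only if I ⊆ gA. -/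
/-!
Put `J = I + gA`. It is admissible, so `Φ`-locality makes it principal with a generator in `S`,
whence `𝔪 ⊆ J𝔫`. Thus `I ⊆ gA + 𝔪` gives `J ⊆ gA + J𝔫`, and Nakayama's lemma yields `J ⊆ gA`.
-/

open IsLocalRing

theorem Ideal.map_mk_le_map_mk_iff {R : Type*} [CommRing R] {𝔪 I J : Ideal R} :
    I.map (Ideal.Quotient.mk 𝔪) ≤ J.map (Ideal.Quotient.mk 𝔪) ↔ I ≤ J ⊔ 𝔪 := by
  rw [Ideal.map_le_iff_le_comap, Ideal.comap_map_of_surjective _ Ideal.Quotient.mk_surjective,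
    ← RingHom.ker_eq_comap_bot, Ideal.mk_ker]

theorem IsLocalRing.le_of_le_sup_mul_maximalIdeal {R : Type*} [CommRing R] [IsLocalRing R]
    {J K : Ideal R} (hJ : J.FG) (h : J ≤ K ⊔ J * maximalIdeal R) : J ≤ K :=
  Submodule.le_of_le_smul_of_le_jacobson_bot hJ (maximalIdeal_le_jacobson ⊥)
    (by rwa [mul_comm] at h)

theorem PhiRing.iInf_le_mul_maximalIdeal_of_mem_adm {A : Type*} [CommRing A] [IsLocalRing A]
    (Φ : PhiRing A) (hΦ : Φ.IsPhiLocal) {J : Ideal A} (hJ : J ∈ Φ.adm) :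
    ⨅ s ∈ Φ.S, Ideal.span {s} * maximalIdeal A ≤ J * maximalIdeal A := by
  obtain ⟨a, -, rfl⟩ := hΦ J hJ
  exact biInf_le (fun s => Ideal.span {s} * maximalIdeal A) hJ

theorem PhiRing.le_span_singleton_iff_mod_m_general
    {A : Type*} [CommRing A] [IsLocalRing A] (Φ : PhiRing A) (hΦ : Φ.IsPhiLocal)
    (𝔪 : Ideal A)
    (h𝔪 : 𝔪 = ⨅ s ∈ Φ.S, Ideal.span {s} * IsLocalRing.maximalIdeal A)
    (I : Ideal A) (g : A)
    (hadm : I ⊔ Ideal.span {g} ∈ Φ.adm) :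
    I.map (Ideal.Quotient.mk 𝔪) ≤ (Ideal.span {g}).map (Ideal.Quotient.mk 𝔪) ↔
      I ≤ Ideal.span {g} := by
  refine ⟨fun h => ?_, Ideal.map_mono⟩
  rw [Ideal.map_mk_le_map_mk_iff] at h
  have h𝔪J : 𝔪 ≤ (I ⊔ Ideal.span {g}) * maximalIdeal A :=
    h𝔪 ▸ Φ.iInf_le_mul_maximalIdeal_of_mem_adm hΦ hadm
  have hJ : I ⊔ Ideal.span {g} ≤ Ideal.span {g} ⊔ (I ⊔ Ideal.span {g}) * maximalIdeal A :=
    sup_le (h.trans (sup_le_sup_left h𝔪J _)) le_sup_left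
  exact le_sup_left.trans (le_of_le_sup_mul_maximalIdeal (Φ.fg_of_mem _ hadm) hJ)

/-- Let `A` be a `Φ`-local `Φ`-ring, `𝔪` the maximal ideal of `A^◁ = S⁻¹A` (an ideal of `A`,
given by `𝔪 = ⋂_{s ∈ S} s𝔫`).  Let `I` be a finitely generated ideal of `A` and `g ∈ A` such
that `(I, g)` is admissible.  Then the image of `I` in `A/𝔪` is contained in the image of
`gA` if and only if `I ⊆ gA`. -/
theorem PhiRing.le_span_singleton_iff_mod_m
    {A : Type*} [CommRing A] [IsLocalRing A] (Φ : PhiRing A) (hΦ : Φ.IsPhiLocal)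
    (𝔪 : Ideal A)
    (h𝔪 : 𝔪 = ⨅ s ∈ Φ.S, Ideal.span {s} * IsLocalRing.maximalIdeal A)
    (I : Ideal A) (hIfg : I.FG) (g : A)
    (hadm : I ⊔ Ideal.span {g} ∈ Φ.adm) :
    I.map (Ideal.Quotient.mk 𝔪) ≤ (Ideal.span {g}).map (Ideal.Quotient.mk 𝔪) ↔
      I ≤ Ideal.span {g} :=
  PhiRing.le_span_singleton_iff_mod_m_general Φ hΦ 𝔪 h𝔪 I g hadm
end

section
/- Let A be a Φ-local Φ-ring and M an A-module. Then M is flat over A if and only if the A^◁-module M ⊗_A A^◁ is flat and the canonical map M → M ⊗_A A^◁ is injective. -/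
/-!
For `s ∈ S`, `Φ`-locality makes every finitely generated ideal containing `s` principal with a
generator in `S`; in a local ring it follows that every `a ∉ S` is divisible by `s`.
If `M → S⁻¹M` is injective, the elements of `S` are `M`-regular, which gives the ideal criterion
for flatness for ideals meeting `S`. For a finitely generated ideal `I` disjoint from `S`,
flatness of `S⁻¹M` shows that the kernel of `I ⊗ M → M` is `S`-torsion. Writing `I = σ J` with
`σ ∈ S`, multiplication by `σ` on `I ⊗ M` factors through `I ⊗ M → J ⊗ M`, which is injective by
dévissage: `J / I` is killed by `σ`, so its cyclic subquotients are `A / C` with `σ ∈ C`, and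
those have `Tor₁(A / C, M) = 0` because `C` is a union of principal ideals generated by elements
of `S`.
-/

open TensorProduct LinearMap Function
open scoped Pointwise nonZeroDivisors

namespace LinearMap

variable {A M K Q B P : Type*} [CommRing A] [AddCommGroup M] [Module A M] [AddCommGroup K]
  [Module A K] [AddCommGroup Q] [Module A Q] [AddCommGroup B] [Module A B] [AddCommGroup P]
  [Module A P]

theorem rTensor_comp_inl_injective_of_exact {α : K →ₗ[A] Q × B} {φ : Q × B →ₗ[A] P}
    (hexact : Exact α φ) (hφ : Surjective φ) (h : Injective (rTensor M (snd A Q B ∘ₗ α))) :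
    Injective (rTensor M (φ ∘ₗ inl A Q B)) := by
  rw [injective_iff_map_eq_zero]
  intro z hz
  obtain ⟨w, hw⟩ := (rTensor_exact M hexact hφ (rTensor M (inl A Q B) z)).1 <| by
    rw [← rTensor_comp_apply, hz]
  have hw0 : w = 0 := (injective_iff_map_eq_zero _).1 h w <| by
    rw [rTensor_comp_apply, hw, ← rTensor_comp_apply, snd_comp_inl, rTensor_zero, zero_apply]
  rw [← rTensor_id_apply M Q z, ← fst_comp_inl A Q B, rTensor_comp_apply, ← hw, hw0, map_zero,
    map_zero]

end LinearMap

namespace Submodule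

variable {A M N : Type*} [CommRing A] [AddCommGroup M] [Module A M] [AddCommGroup N] [Module A N]

theorem rTensor_inclusion_injective_of_le {Q P R : Submodule A N} (hQP : Q ≤ P) (hPR : P ≤ R)
    (h : Injective (rTensor M (inclusion (hQP.trans hPR)))) :
    Injective (rTensor M (inclusion hQP)) := by
  rw [show inclusion (hQP.trans hPR) = inclusion hPR ∘ₗ inclusion hQP from rfl,
    rTensor_comp, coe_comp] at h
  exact h.of_comp

end Submodule

namespace Ideal

variable {A M : Type*} [CommRing A] [AddCommGroup M] [Module A M]

theorem rTensor_subtype_injective_of_eq_span_singleton {J : Ideal A} {d : A}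
    (hJ : J = span {d}) (hd : IsSMulRegular M d) : Injective (rTensor M J.subtype) := by
  subst hJ
  let e : A →ₗ[A] span {d} := toSpanSingleton A _ ⟨d, mem_span_singleton_self d⟩
  have he : Surjective e := by
    rintro ⟨y, hy⟩
    obtain ⟨c, rfl⟩ := mem_span_singleton'.1 hy
    exact ⟨c, rfl⟩
  have hde : (span {d}).subtype ∘ₗ e = d • LinearMap.id := by
    ext; simp [e]
  refine Injective.of_comp_right ?_ (rTensor_surjective M he)
  rw [← coe_comp, ← rTensor_comp, hde, rTensor_smul, rTensor_id]
  intro x y hxy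
  apply (TensorProduct.lid A M).injective
  apply hd
  simpa using congrArg (TensorProduct.lid A M) hxy

/-- Tensor the exact sequence `(Q : p) → Q × A → Q + A p → 0`, `c ↦ (-c p, c)`, with `M`. -/
theorem rTensor_inclusion_sup_span_singleton_injective {Q : Ideal A} {p : A}
    (h : Injective (rTensor M (Q.colon {p}).subtype)) :
    Injective (rTensor M (Submodule.inclusion (le_sup_left : Q ≤ Q ⊔ A ∙ p))) := by
  set C := Q.colon {p}
  set P := Q ⊔ A ∙ p
  let α : C →ₗ[A] Q × A :=
    (codRestrict Q (-(toSpanSingleton A A p ∘ₗ C.subtype)) fun c => by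
      simpa using Q.neg_mem (Submodule.mem_colon_singleton.1 c.2)).prod C.subtype
  let φ : Q × A →ₗ[A] P :=
    codRestrict P (Q.subtype.coprod (toSpanSingleton A A p)) fun x =>
      add_mem (Submodule.mem_sup_left x.1.2)
        (Submodule.mem_sup_right (Submodule.smul_mem _ _ (Submodule.mem_span_singleton_self p)))
  have hexact : Exact α φ := by
    intro y
    constructor
    · obtain ⟨q, x⟩ := y
      intro hqx
      have hqx' : (q : A) + x • p = 0 := congrArg Subtype.val hqx
      refine ⟨⟨x, Submodule.mem_colon_singleton.2 ?_⟩, ?_⟩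
      · rw [eq_neg_of_add_eq_zero_right hqx']
        exact Q.neg_mem q.2
      · ext <;> simp [α, eq_neg_of_add_eq_zero_left hqx']
    · rintro ⟨c, rfl⟩
      apply Subtype.ext
      change -((c : A) • p) + (c : A) • p = 0
      exact neg_add_cancel _
  have hφ : Surjective φ := by
    rintro ⟨y, hy⟩
    obtain ⟨q, hq, z, hz, rfl⟩ := Submodule.mem_sup.1 hy
    obtain ⟨x, rfl⟩ := Submodule.mem_span_singleton.1 hz
    exact ⟨(⟨q, hq⟩, x), rfl⟩
  have hinl : φ ∘ₗ inl A Q A = Submodule.inclusion (le_sup_left : Q ≤ P) := by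
    ext x
    change (x : A) + (0 : A) • p = x
    simp
  rw [← hinl]
  exact rTensor_comp_inl_injective_of_exact hexact hφ h

theorem rTensor_inclusion_injective_of_le_sup_of_le_colon {s : A}
    (hs : ∀ C : Ideal A, s ∈ C → Injective (rTensor M C.subtype)) {N : Ideal A} (hN : N.FG)
    {Q P : Ideal A} (hQP : Q ≤ P) (hPN : P ≤ Q ⊔ N) (hNQ : N ≤ Q.colon {s}) :
    Injective (rTensor M (Submodule.inclusion hQP)) := by
  induction N, hN using Submodule.fg_induction generalizing Q P with
  | singleton p =>
    refine Submodule.rTensor_inclusion_injective_of_le hQP hPN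
      (rTensor_inclusion_sup_span_singleton_injective (hs _ ?_))
    rw [Submodule.mem_colon_singleton, smul_eq_mul, mul_comm, ← smul_eq_mul,
      ← Submodule.mem_colon_singleton]
    exact hNQ (Submodule.mem_span_singleton_self p)
  | sup N₁ N₂ _ _ ih₁ ih₂ =>
    have hQQ₁ : Q ≤ Q ⊔ N₁ := le_sup_left
    have hQ₁R : Q ⊔ N₁ ≤ Q ⊔ (N₁ ⊔ N₂) := sup_le_sup_left le_sup_left Q
    have h₁ := ih₁ hQQ₁ le_rfl (le_sup_left.trans hNQ)
    have h₂ := ih₂ hQ₁R (sup_assoc Q N₁ N₂).ge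
      ((le_sup_right.trans hNQ).trans (Submodule.colon_mono le_sup_left subset_rfl))
    refine Submodule.rTensor_inclusion_injective_of_le hQP hPN ?_
    rw [show Submodule.inclusion (hQP.trans hPN) =
      Submodule.inclusion hQ₁R ∘ₗ Submodule.inclusion hQQ₁ from rfl, rTensor_comp, coe_comp]
    exact h₂.comp h₁

theorem isSMulRegular_rTensor_of_le_colon {I J : Ideal A} (hIJ : I ≤ J) {σ : A} (hσ : σ ∈ A⁰)
    (hJ : J ≤ I.colon {σ}) (hI : I ≤ σ • J)
    (hinj : Injective (rTensor M (Submodule.inclusion hIJ))) :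
    IsSMulRegular (I ⊗[A] M) σ := by
  let μ : J →ₗ[A] I := codRestrict I (σ • J.subtype) fun y => by
    simpa [mul_comm] using Submodule.mem_colon_singleton.1 (hJ y.2)
  have hμ : Bijective μ := by
    refine ⟨fun y y' h => Subtype.ext ?_, fun x => ?_⟩
    · exact (mul_cancel_left_mem_nonZeroDivisors hσ).1 (congrArg Subtype.val h)
    · obtain ⟨y, hy, hyx⟩ := Submodule.mem_smul_pointwise_iff_exists _ _ _ |>.1 (hI x.2)
      exact ⟨⟨y, hy⟩, Subtype.ext hyx⟩
  have hσμ : μ ∘ₗ Submodule.inclusion hIJ = σ • LinearMap.id := by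
    ext; rfl
  have hfactor : (σ • · : I ⊗[A] M → I ⊗[A] M) =
      rTensor M μ ∘ rTensor M (Submodule.inclusion hIJ) := by
    rw [← coe_comp, ← rTensor_comp, hσμ, rTensor_smul, rTensor_id]; rfl
  rw [IsSMulRegular, hfactor]
  exact (LinearEquiv.ofBijective _ hμ |>.rTensor M).injective.comp hinj

theorem exists_smul_eq_zero_of_rTensor_subtype_eq_zero (S : Submonoid A)
    [Module.Flat A (LocalizedModule S M)] (I : Ideal A) {z : I ⊗[A] M}
    (hz : rTensor M I.subtype z = 0) : ∃ s ∈ S, s • z = 0 := by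
  let ι := LocalizedModule.mkLinearMap S M
  have : IsLocalizedModule S (lTensor I ι) := by
    have : IsLocalizedModule S (rTensor I ι) := IsLocalizedModule.rTensor (R := A) (S := S) (g := ι)
    rw [show lTensor I ι = (TensorProduct.comm A _ _).toLinearMap ∘ₗ rTensor I ι ∘ₗ
      (TensorProduct.comm A _ _).toLinearMap by ext; rfl]
    exact IsLocalizedModule.of_linearEquiv S _ _
  have hιz : lTensor I ι z = 0 := by
    apply Module.Flat.rTensor_preserves_injective_linearMap _ I.injective_subtype
    rw [← LinearMap.comp_apply, rTensor_comp_lTensor, ← lTensor_comp_rTensor, LinearMap.comp_apply,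
      hz, map_zero, map_zero]
  obtain ⟨s, hs⟩ :=
    (IsLocalizedModule.eq_iff_exists S (lTensor I ι)).1 (hιz.trans (map_zero _).symm)
  exact ⟨s, s.2, by rwa [smul_zero] at hs⟩

end Ideal

namespace PhiRing

variable {A M : Type*} [CommRing A] [AddCommGroup M] [Module A M] {Φ : PhiRing A}

theorem mem_adm_of_mem_S {I : Ideal A} (hI : I.FG) {s : A} (hs : s ∈ Φ.S) (hsI : s ∈ I) :
    I ∈ Φ.adm :=
  Φ.enlarge_mem _ hs I hI ((Ideal.span_singleton_le_iff_mem _).2 hsI)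

theorem IsPhiLocal.S_le_nonZeroDivisors (hΦ : Φ.IsPhiLocal) : Φ.S ≤ A⁰ := by
  intro s hs
  obtain ⟨d, hd, hsd⟩ := hΦ _ hs
  obtain ⟨c, hc⟩ := Ideal.mem_span_singleton.1 (hsd ▸ Ideal.mem_span_singleton_self s)
  obtain ⟨e, he⟩ := Ideal.mem_span_singleton.1 (hsd.symm ▸ Ideal.mem_span_singleton_self d)
  have hce : c * e = 1 := (mul_cancel_left_mem_nonZeroDivisors hd).1 <| by
    linear_combination -e * hc - he
  rw [hc]
  exact mul_mem_nonZeroDivisors.2 ⟨hd, (IsUnit.of_mul_eq_one e hce).mem_nonZeroDivisors⟩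

theorem IsPhiLocal.exists_mem_S_eq_span_singleton (hΦ : Φ.IsPhiLocal) {I : Ideal A}
    (hI : I ∈ Φ.adm) : ∃ d ∈ Φ.S, I = Ideal.span {d} := by
  obtain ⟨d, -, rfl⟩ := hΦ I hI
  exact ⟨d, hI, rfl⟩

theorem IsPhiLocal.mem_S_or_dvd [IsLocalRing A] (hΦ : Φ.IsPhiLocal) {s : A} (hs : s ∈ Φ.S)
    (a : A) : a ∈ Φ.S ∨ s ∣ a := by
  have hadm : Ideal.span {a, s} ∈ Φ.adm :=
    mem_adm_of_mem_S (Submodule.fg_span (Set.toFinite _)) hs (Ideal.subset_span (by simp))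
  obtain ⟨d, hd, hI⟩ := hΦ _ hadm
  have hmem : ∀ x ∈ ({a, s} : Set A), d ∣ x := fun x hx =>
    Ideal.mem_span_singleton.1 (hI ▸ Ideal.subset_span hx)
  obtain ⟨c, hc⟩ := hmem a (by simp)
  obtain ⟨f, hf⟩ := hmem s (by simp)
  obtain ⟨x, y, hxy⟩ := Ideal.mem_span_pair.1 (hI.symm ▸ Ideal.mem_span_singleton_self d)
  have hunit : x * c + y * f = 1 := (mul_cancel_left_mem_nonZeroDivisors hd).1 <| by
    linear_combination hxy - x * hc - y * hf
  rcases IsLocalRing.isUnit_or_isUnit_of_isUnit_add (hunit ▸ isUnit_one) with hu | hu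
  · left
    show Ideal.span {a} ∈ Φ.adm
    rwa [hc, Ideal.span_singleton_mul_right_unit (isUnit_of_mul_isUnit_right hu), ← hI]
  · right
    rw [hf]
    exact (IsUnit.mul_right_dvd (isUnit_of_mul_isUnit_right hu)).2 (Dvd.intro c hc.symm)

theorem IsPhiLocal.rTensor_subtype_injective_of_mem_S (hΦ : Φ.IsPhiLocal)
    (hreg : ∀ s : Φ.S, IsSMulRegular M (s : A)) {C : Ideal A} {s : A} (hs : s ∈ Φ.S)
    (hsC : s ∈ C) : Injective (rTensor M C.subtype) := by
  rw [injective_iff_map_eq_zero]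
  intro x hx
  obtain ⟨J, hJ, hJC, y, rfl⟩ := Submodule.exists_fg_le_eq_rTensor_inclusion x
  have hJ'C : J ⊔ Ideal.span {s} ≤ C := sup_le hJC ((Ideal.span_singleton_le_iff_mem _).2 hsC)
  obtain ⟨d, hd, hJd⟩ := hΦ.exists_mem_S_eq_span_singleton <|
    mem_adm_of_mem_S (hJ.sup (Submodule.fg_span_singleton s)) hs
      (Submodule.mem_sup_right (Ideal.mem_span_singleton_self s))
  have hinj := Ideal.rTensor_subtype_injective_of_eq_span_singleton hJd (hreg ⟨d, hd⟩)
  rw [show Submodule.inclusion hJC = Submodule.inclusion hJ'C ∘ₗ Submodule.inclusion le_sup_left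
    from rfl, rTensor_comp_apply] at hx ⊢
  rw [← rTensor_comp_apply] at hx
  rw [(injective_iff_map_eq_zero _).1 hinj _ hx, map_zero]

theorem IsPhiLocal.rTensor_subtype_injective_of_forall_notMem_S [IsLocalRing A]
    (hΦ : Φ.IsPhiLocal) (hreg : ∀ s : Φ.S, IsSMulRegular M (s : A))
    [Module.Flat A (LocalizedModule Φ.S M)] {I : Ideal A} (hI : I.FG) (hIS : ∀ x ∈ I, x ∉ Φ.S) :
    Injective (rTensor M I.subtype) := by
  rw [injective_iff_map_eq_zero]
  intro z hz
  obtain ⟨σ, hσ, hσz⟩ := Ideal.exists_smul_eq_zero_of_rTensor_subtype_eq_zero Φ.S I hz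
  obtain ⟨n, a, ha⟩ := Submodule.fg_iff_exists_fin_generating_family.1 hI
  have haI : ∀ i, a i ∈ I := fun i => ha ▸ Submodule.subset_span ⟨i, rfl⟩
  have hdvd : ∀ i, σ ∣ a i := fun i => (hΦ.mem_S_or_dvd hσ (a i)).resolve_left (hIS _ (haI i))
  choose b hb using hdvd
  set N : Ideal A := Submodule.span A (Set.range b)
  have hIN : I = σ • N := by
    rw [← ha, show a = fun i => σ • b i from funext hb, Submodule.smul_span, Set.smul_set_range]
  have hle : I ≤ N := ha ▸ Submodule.span_le.2 (Set.range_subset_iff.2 fun i =>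
    hb i ▸ N.mul_mem_left σ (Submodule.subset_span ⟨i, rfl⟩))
  have hNI : N ≤ I.colon {σ} := Submodule.span_le.2 <| Set.range_subset_iff.2 fun i => by
    rw [SetLike.mem_coe, Submodule.mem_colon_singleton, smul_eq_mul, mul_comm, ← hb]
    exact haI i
  have hinj := Ideal.rTensor_inclusion_injective_of_le_sup_of_le_colon
    (fun C hC => hΦ.rTensor_subtype_injective_of_mem_S hreg hσ hC)
    (Submodule.fg_span (Set.finite_range b)) hle le_sup_right hNI
  exact Ideal.isSMulRegular_rTensor_of_le_colon hle (hΦ.S_le_nonZeroDivisors hσ) hNI hIN.le hinj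
    (hσz.trans (smul_zero σ).symm)

end PhiRing

/-- Let `A` be a `Φ`-local `Φ`-ring and `M` an `A`-module.  Then `M` is flat over `A` if and
only if the `A^◁`-module `M ⊗_A A^◁ = S⁻¹M` is flat and the canonical map `M → M ⊗_A A^◁`
is injective. -/
theorem PhiRing.flat_iff_closure_flat_and_injective
    {A : Type*} [CommRing A] [IsLocalRing A] (Φ : PhiRing A) (hΦ : Φ.IsPhiLocal)
    (M : Type*) [AddCommGroup M] [Module A M] :
    Module.Flat A M ↔
      Module.Flat (Localization Φ.S) (LocalizedModule Φ.S M) ∧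
        Function.Injective (LocalizedModule.mkLinearMap Φ.S M) := by
  refine ⟨fun _ => ⟨Module.Flat.localizedModule Φ.S, ?_⟩, fun ⟨_, hinj⟩ => ?_⟩
  · exact (IsLocalizedModule.injective_iff_isRegular Φ.S _).2 fun s =>
      Module.Flat.isSMulRegular_of_nonZeroDivisors (hΦ.S_le_nonZeroDivisors s.2)
  have hreg := (IsLocalizedModule.injective_iff_isRegular Φ.S _).1 hinj
  have : Module.Flat A (LocalizedModule Φ.S M) := Module.Flat.trans A (Localization Φ.S) _
  refine Module.Flat.iff_rTensor_injective.2 fun I hI => ?_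
  rcases em (∃ s ∈ I, s ∈ Φ.S) with ⟨s, hsI, hs⟩ | h
  · exact hΦ.rTensor_subtype_injective_of_mem_S hreg hs hsI
  · exact hΦ.rTensor_subtype_injective_of_forall_notMem_S hreg hI fun x hx hxS => h ⟨x, hx, hxS⟩
end

section
/- Let A be a local ring with an ideal 𝔪 ⊆ A such that S = A∖𝔪 is multiplicative and S⁻¹𝔪 = 𝔪; let K be a B-module for an A-algebra B and 𝔖 ⊆ K a finite subset with K = B𝔖 + 𝔪K and S⁻¹K = (S⁻¹B)𝔖. Then K = B𝔖. -/
/-- Nakayama-type lemma for `Φ`-local situations.  Let `A` be a local ring, `𝔪` an ideal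
of `A` with `S = A ∖ 𝔪` multiplicative and `S⁻¹𝔪 = 𝔪` (expressed: every `x ∈ 𝔪` is
divisible by every `s ∈ S` with quotient in `𝔪`).  Let `B` be an `A`-algebra, `K` a
`B`-module and `𝔖 ⊆ K` a finite subset with `K = B𝔖 + 𝔪K` and `S⁻¹K = (S⁻¹B)𝔖`
(expressed: every element of `K` lands in `B𝔖` after scaling by some `s ∈ S`).
Then `K = B𝔖`. -/
theorem span_eq_top_of_span_sup_smul
    (A : Type*) [CommRing A] [IsLocalRing A]
    (𝔪 : Ideal A) (S : Submonoid A) (hS : (S : Set A) = {a : A | a ∉ 𝔪})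
    (hdiv : ∀ x ∈ 𝔪, ∀ s ∈ S, ∃ y ∈ 𝔪, x = s * y)
    (B : Type*) [CommRing B] [Algebra A B]
    (K : Type*) [AddCommGroup K] [Module A K] [Module B K] [IsScalarTower A B K]
    (𝔖 : Finset K)
    (hgen : ∀ k : K, ∃ k' ∈ Submodule.span B (𝔖 : Set K),
      k - k' ∈ 𝔪 • (⊤ : Submodule A K))
    (hloc : ∀ k : K, ∃ s ∈ S, s • k ∈ Submodule.span B (𝔖 : Set K)) :
    Submodule.span B (𝔖 : Set K) = ⊤ := by
  set N := Submodule.span B (𝔖 : Set K) with hN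
  have hm : 𝔪 • (⊤ : Submodule A K) ≤ N.restrictScalars A := by
    rw [Submodule.smul_le]
    intro x hx k _
    obtain ⟨s, hs, hsk⟩ := hloc k
    obtain ⟨y, hy, hxy⟩ := hdiv x hx s hs
    have hx' : x • k = y • (s • k) := by
      rw [hxy, mul_smul, smul_comm]
    rw [hx']
    exact (N.restrictScalars A).smul_mem y hsk
  rw [eq_top_iff]
  intro k _
  obtain ⟨k', hk', hkk'⟩ := hgen k
  have h1 : k - k' ∈ N := hm hkk'
  have := N.add_mem h1 hk'
  simpa using this
end

section
/- Let A be a Φ-ring and M an A-module such that for every admissible ideal I the natural map M → Hom_A(I, M) (m ↦ (x ↦ xm)) is bijective. Then for every admissible ideal I = (f_1,...,f_r), the first local cohomology H^1_I(M) vanishes. -/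
section

variable {A : Type*} [CommRing A] (M : Type*) [AddCommGroup M] [Module A M]

/-- Powers of `a` act invertibly on the localization of `M` away from `a * b`. -/
lemma pow_isUnit_end_left (a b : A) (x : ↥(Submonoid.powers a)) :
    IsUnit (algebraMap A (Module.End A (LocalizedModule (Submonoid.powers (a * b)) M))
      (x : A)) := by
  obtain ⟨n, hn⟩ := x.2
  have h := IsLocalizedModule.map_units
    (LocalizedModule.mkLinearMap (Submonoid.powers (a * b)) M)
    (⟨(a * b) ^ n, ⟨n, rfl⟩⟩ : Submonoid.powers (a * b))
  have h' : IsUnit (algebraMap A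
      (Module.End A (LocalizedModule (Submonoid.powers (a * b)) M)) ((a * b) ^ n)) := h
  rw [mul_pow, map_mul] at h'
  rw [← hn]
  have hc : Commute
      ((algebraMap A (Module.End A (LocalizedModule (Submonoid.powers (a * b)) M))) (a ^ n))
      ((algebraMap A (Module.End A (LocalizedModule (Submonoid.powers (a * b)) M))) (b ^ n)) :=
    (Commute.all (a ^ n) (b ^ n)).map
      (algebraMap A (Module.End A (LocalizedModule (Submonoid.powers (a * b)) M)))
  exact (hc.isUnit_mul_iff.mp h').1

/-- Powers of `b` act invertibly on the localization of `M` away from `a * b`. -/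
lemma pow_isUnit_end_right (a b : A) (x : ↥(Submonoid.powers b)) :
    IsUnit (algebraMap A (Module.End A (LocalizedModule (Submonoid.powers (a * b)) M))
      (x : A)) := by
  obtain ⟨n, hn⟩ := x.2
  have h := IsLocalizedModule.map_units
    (LocalizedModule.mkLinearMap (Submonoid.powers (a * b)) M)
    (⟨(a * b) ^ n, ⟨n, rfl⟩⟩ : Submonoid.powers (a * b))
  have h' : IsUnit (algebraMap A
      (Module.End A (LocalizedModule (Submonoid.powers (a * b)) M)) ((a * b) ^ n)) := h
  rw [mul_pow, map_mul] at h'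
  rw [← hn]
  have hc : Commute
      ((algebraMap A (Module.End A (LocalizedModule (Submonoid.powers (a * b)) M))) (a ^ n))
      ((algebraMap A (Module.End A (LocalizedModule (Submonoid.powers (a * b)) M))) (b ^ n)) :=
    (Commute.all (a ^ n) (b ^ n)).map
      (algebraMap A (Module.End A (LocalizedModule (Submonoid.powers (a * b)) M)))
  exact (hc.isUnit_mul_iff.mp h').2

/-- The canonical map `M[1/a] → M[1/(a*b)]`. -/
noncomputable def locMapLeft (a b : A) :
    LocalizedModule (Submonoid.powers a) M →ₗ[A]
      LocalizedModule (Submonoid.powers (a * b)) M :=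
  LocalizedModule.lift (Submonoid.powers a)
    (LocalizedModule.mkLinearMap (Submonoid.powers (a * b)) M)
    (pow_isUnit_end_left M a b)

/-- The canonical map `M[1/b] → M[1/(a*b)]`. -/
noncomputable def locMapRight (a b : A) :
    LocalizedModule (Submonoid.powers b) M →ₗ[A]
      LocalizedModule (Submonoid.powers (a * b)) M :=
  LocalizedModule.lift (Submonoid.powers b)
    (LocalizedModule.mkLinearMap (Submonoid.powers (a * b)) M)
    (pow_isUnit_end_right M a b)

/-- The natural map `M → Hom_A(I, M)`, `m ↦ (x ↦ x • m)`. -/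
@[simps] def smulHom (I : Ideal A) (m : M) : ↥I →ₗ[A] M where
  toFun x := (x : A) • m
  map_add' x y := by simp [add_smul]
  map_smul' a x := by simp [mul_smul]

end

open LocalizedModule
open Filter (atTop eventually_ge_atTop eventually_all)

section Localization

variable {A : Type*} [CommRing A] {M : Type*} [AddCommGroup M] [Module A M]

lemma LocalizedModule.smul_mk_self {S : Submonoid A} (s : S) (m : M) :
    (s : A) • mk m s = mk m 1 := by
  rw [smul'_mk, ← Submonoid.smul_def, mk_cancel]

lemma LocalizedModule.mk_pow_eq_mk_pow_add (a : A) (n p : ℕ) (m : M) :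
    mk m (Submonoid.pow a n) = mk (a ^ p • m) (Submonoid.pow a (p + n)) := by
  have h : Submonoid.pow a (p + n) = Submonoid.pow a p * Submonoid.pow a n :=
    Subtype.ext (pow_add a p n)
  rw [h, ← mk_cancel_common_left (Submonoid.pow a p), Submonoid.smul_def, Submonoid.pow_apply]

lemma smul_locMapLeft_mk_self (a b : A) (s : Submonoid.powers a) (m : M) :
    (s : A) • locMapLeft M a b (mk m s) = mk m 1 := by
  rw [← map_smul, smul_mk_self, locMapLeft, lift_mk_one, mkLinearMap_apply]

lemma smul_locMapRight_mk_self (a b : A) (s : Submonoid.powers b) (m : M) :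
    (s : A) • locMapRight M a b (mk m s) = mk m 1 := by
  rw [← map_smul, smul_mk_self, locMapRight, lift_mk_one, mkLinearMap_apply]

lemma exists_pow_smul_eq_of_locMapLeft_eq_locMapRight {a b : A} {n : ℕ} {x y : M}
    (h : locMapLeft M a b (mk x (Submonoid.pow a n)) =
      locMapRight M a b (mk y (Submonoid.pow b n))) :
    ∃ N : ℕ, (a * b) ^ N • b ^ n • x = (a * b) ^ N • a ^ n • y := by
  have hxy : mk (b ^ n • x) (1 : Submonoid.powers (a * b)) = mk (a ^ n • y) 1 := by
    rw [← smul'_mk, ← smul'_mk, ← smul_locMapLeft_mk_self a b (Submonoid.pow a n),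
      ← smul_locMapRight_mk_self a b (Submonoid.pow b n), h, smul_comm]
    rfl
  obtain ⟨⟨_, N, rfl⟩, hN⟩ := mk_eq.1 hxy
  exact ⟨N, by simpa [Submonoid.smul_def] using hN⟩

lemma eventually_pow_smul_eq {a : A} {x y : M} {N₀ : ℕ} (h : a ^ N₀ • x = a ^ N₀ • y) :
    ∀ᶠ N in atTop, a ^ N • x = a ^ N • y := by
  filter_upwards [eventually_ge_atTop N₀] with N hN
  rw [← Nat.sub_add_cancel hN, pow_add, mul_smul, mul_smul, h]

variable {ι : Type*} [Finite ι]

lemma exists_common_pow_denom (f : ι → A) (c : ∀ i, LocalizedModule (Submonoid.powers (f i)) M) :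
    ∃ (n : ℕ) (x : ι → M), ∀ i, c i = mk (x i) (Submonoid.pow (f i) n) := by
  have h : ∀ i, ∀ᶠ n in atTop, ∃ x : M, c i = mk x (Submonoid.pow (f i) n) := by
    intro i
    induction c i using LocalizedModule.induction_on with
    | h x s =>
      obtain ⟨_, n₀, rfl⟩ := s
      filter_upwards [eventually_ge_atTop n₀] with n hn
      have h := mk_pow_eq_mk_pow_add (f i) n₀ (n - n₀) x
      rw [Nat.sub_add_cancel hn] at h
      exact ⟨_, h⟩
  obtain ⟨n, hn⟩ := (eventually_all.2 h).exists
  choose x hx using hn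
  exact ⟨n, x, hx⟩

theorem exists_compatible_numerators (f : ι → A)
    (c : ∀ i, LocalizedModule (Submonoid.powers (f i)) M)
    (hc : ∀ i j, locMapLeft M (f i) (f j) (c i) = locMapRight M (f i) (f j) (c j)) :
    ∃ (k : ℕ) (a : ι → M), (∀ i j, f j ^ k • a i = f i ^ k • a j) ∧
      ∀ i, c i = mk (a i) (Submonoid.pow (f i) k) := by
  obtain ⟨n, x, hx⟩ := exists_common_pow_denom f c
  have h : ∀ i j, ∀ᶠ N in atTop,
      (f i * f j) ^ N • f j ^ n • x i = (f i * f j) ^ N • f i ^ n • x j := fun i j ↦ by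
    obtain ⟨N₀, hN₀⟩ := exists_pow_smul_eq_of_locMapLeft_eq_locMapRight (hx i ▸ hx j ▸ hc i j)
    exact eventually_pow_smul_eq hN₀
  obtain ⟨N, hN⟩ := (eventually_all.2 fun i ↦ eventually_all.2 (h i)).exists
  refine ⟨N + n, fun i ↦ f i ^ N • x i, fun i j ↦ ?_,
    fun i ↦ by rw [hx i, mk_pow_eq_mk_pow_add]⟩
  calc f j ^ (N + n) • f i ^ N • x i = (f i * f j) ^ N • f j ^ n • x i := by
        simp only [smul_smul]; ring_nf
    _ = (f i * f j) ^ N • f i ^ n • x j := hN i j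
    _ = f i ^ (N + n) • f j ^ N • x j := by simp only [smul_smul]; ring_nf

end Localization

namespace PhiRing

variable {A : Type*} [CommRing A] (Φ : PhiRing A)

lemma pow_mem_adm {I : Ideal A} (hI : I ∈ Φ.adm) (n : ℕ) : I ^ n ∈ Φ.adm := by
  induction n with
  | zero => simpa using Φ.top_mem
  | succ n ih => rw [pow_succ]; exact Φ.mul_mem _ ih _ hI

lemma mem_adm_of_le_radical {I J : Ideal A} (hI : I ∈ Φ.adm) (hJ : J.FG) (hIJ : I ≤ J.radical) :
    J ∈ Φ.adm := by
  obtain ⟨n, hn⟩ := Ideal.exists_pow_le_of_le_radical_of_fg hIJ (Φ.fg_of_mem I hI)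
  exact Φ.enlarge_mem _ (Φ.pow_mem_adm hI n) J hJ hn

lemma span_range_pow_mem_adm {ι : Type*} [Finite ι] {f : ι → A}
    (hf : Ideal.span (Set.range f) ∈ Φ.adm) (k : ℕ) :
    Ideal.span (Set.range fun i ↦ f i ^ k) ∈ Φ.adm := by
  refine Φ.mem_adm_of_le_radical hf (Submodule.fg_span (Set.finite_range _)) ?_
  rw [Ideal.span_le]
  rintro _ ⟨i, rfl⟩
  exact ⟨k, Ideal.subset_span ⟨i, rfl⟩⟩

end PhiRing

section Gluing

variable {A : Type*} [CommRing A] {M : Type*} [AddCommGroup M] [Module A M] {ι : Type*}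

lemma eq_zero_of_forall_smul_eq_zero {g : ι → A}
    (hg : Function.Injective fun m : M ↦ smulHom M (Ideal.span (Set.range g)) m) {z : M}
    (hz : ∀ i, g i • z = 0) : z = 0 := by
  have hann : Ideal.span (Set.range g) ≤ (Submodule.span A {z}).annihilator := by
    rw [Ideal.span_le]
    rintro _ ⟨i, rfl⟩
    exact (Submodule.mem_annihilator_span_singleton z _).2 (hz i)
  refine hg (LinearMap.ext fun x ↦ ?_)
  simpa using (Submodule.mem_annihilator_span_singleton z (x : A)).1 (hann x.2)

theorem exists_smul_eq_of_bijective_smulHom [Fintype ι] {g : ι → A}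
    (hg : Function.Bijective fun m : M ↦ smulHom M (Ideal.span (Set.range g)) m) {a : ι → M}
    (ha : ∀ i j, g j • a i = g i • a j) : ∃ m : M, ∀ i, g i • m = a i := by
  classical
  have hrange : LinearMap.range (Fintype.linearCombination A g) = Ideal.span (Set.range g) :=
    Fintype.range_linearCombination A g
  let π : (ι → A) →ₗ[A] Ideal.span (Set.range g) :=
    (Fintype.linearCombination A g).codRestrict _ fun t ↦ hrange ▸ LinearMap.mem_range_self _ t
  have hπ : Function.Surjective π := by
    rintro ⟨x, hx⟩
    rw [← hrange] at hx
    obtain ⟨t, rfl⟩ := hx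
    exact ⟨t, rfl⟩
  let Ψ := Fintype.linearCombination A a
  have hker : LinearMap.ker π ≤ LinearMap.ker Ψ := fun t ht ↦ by
    refine eq_zero_of_forall_smul_eq_zero hg.1 fun j ↦ ?_
    have hgt : Fintype.linearCombination A g t = 0 := congrArg Subtype.val ht
    calc g j • Ψ t = Fintype.linearCombination A g t • a j := by
          simp only [Ψ, Fintype.linearCombination_apply, Finset.smul_sum, Finset.sum_smul]
          refine Finset.sum_congr rfl fun i _ ↦ ?_
          rw [smul_comm, ha, smul_smul, smul_eq_mul]
      _ = 0 := by rw [hgt, zero_smul]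
  let φ : Ideal.span (Set.range g) →ₗ[A] M :=
    (LinearMap.ker π).liftQ Ψ hker ∘ₗ (π.quotKerEquivOfSurjective hπ).symm.toLinearMap
  obtain ⟨m, hm⟩ := hg.2 φ
  refine ⟨m, fun i ↦ ?_⟩
  simpa [φ, π, Ψ, Fintype.linearCombination_apply_single] using
    LinearMap.congr_fun hm (π (Pi.single i 1))

end Gluing

/-- Let `A` be a `Φ`-ring and `M` an `A`-module such that for every admissible ideal `I`
the natural map `M → Hom_A(I, M)` is bijective.  Then for every admissible ideal
`I = (f 1, ..., f r)` the first local cohomology `H^1_I(M)` vanishes: computing `H^1` by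
the Čech complex `0 → M → ∏_i M[1/f i] → ∏_{i<j} M[1/(f i * f j)] → ⋯`, every `1`-cocycle
`c` is the boundary of some `m ∈ M`. -/
theorem cech_H1_vanishes_of_twoDeep
    {A : Type*} [CommRing A] (Φ : PhiRing A)
    (M : Type*) [AddCommGroup M] [Module A M]
    (hM : ∀ I ∈ Φ.adm, Function.Bijective (fun m : M => smulHom M I m))
    (r : ℕ) (f : Fin r → A) (hadm : Ideal.span (Set.range f) ∈ Φ.adm)
    (c : ∀ i : Fin r, LocalizedModule (Submonoid.powers (f i)) M)
    (hc : ∀ i j : Fin r, locMapLeft M (f i) (f j) (c i) = locMapRight M (f i) (f j) (c j)) :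
    ∃ m : M, ∀ i : Fin r,
      LocalizedModule.mkLinearMap (Submonoid.powers (f i)) M m = c i := by
  obtain ⟨k, a, ha, hca⟩ := exists_compatible_numerators f c hc
  obtain ⟨m, hm⟩ := exists_smul_eq_of_bijective_smulHom (hM _ (Φ.span_range_pow_mem_adm hadm k)) ha
  refine ⟨m, fun i ↦ ?_⟩
  rw [hca i, ← hm i, mkLinearMap_apply, ← mk_cancel (Submonoid.pow (f i) k)]
  rfl
end

section
/- Let A be a commutative ring, and let 𝔭 be a minimal prime of A. If A is 1-deep with respect to a family Φ of finitely generated admissible ideals (i.e., A has no nonzero I-torsion for any admissible I), then 𝔭 contains no admissible ideal. -/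
/-! In the localization `A_𝔭` at a minimal prime the maximal ideal is the nilradical, so a
finitely generated `I ≤ 𝔭` has `I ^ n` vanishing in `A_𝔭`. Since `I ^ n` is a finite module, a
single `s ∉ 𝔭` then kills all of it, and `1`-deepness forces `s = 0 ∈ 𝔭`. -/

namespace Ideal

variable {A : Type*} [CommRing A]

theorem exists_notMem_forall_mul_eq_zero_of_map_eq_bot {J 𝔭 : Ideal A} [𝔭.IsPrime]
    (hJ : J.FG) (hJ𝔭 : J.map (algebraMap A (Localization.AtPrime 𝔭)) = ⊥) :
    ∃ s ∉ 𝔭, ∀ x ∈ J, x * s = 0 := by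
  have : Module.Finite A J := Module.Finite.iff_fg.mpr hJ
  have hsupp : (⟨𝔭, ‹_›⟩ : PrimeSpectrum A) ∉ Module.support A J := by
    refine Module.notMem_support_iff'.mpr fun x ↦ ?_
    have hx : algebraMap A (Localization.AtPrime 𝔭) x = 0 := by
      rw [← mem_bot, ← hJ𝔭]
      exact mem_map_of_mem _ x.2
    obtain ⟨⟨r, hr⟩, hrx⟩ := (IsLocalization.map_eq_zero_iff 𝔭.primeCompl _ _).mp hx
    exact ⟨r, hr, Subtype.ext hrx⟩
  obtain ⟨s, hs, hs𝔭⟩ := SetLike.not_le_iff_exists.mp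
    (Module.mem_support_iff_of_finite.not.mp hsupp)
  refine ⟨s, hs𝔭, fun x hx ↦ ?_⟩
  rw [mul_comm]
  exact congrArg Subtype.val (Module.mem_annihilator.mp hs ⟨x, hx⟩)

theorem exists_pow_map_eq_bot_of_le_mem_minimalPrimes {I 𝔭 : Ideal A} [𝔭.IsPrime] (hI : I.FG)
    (h𝔭 : 𝔭 ∈ minimalPrimes A) (hI𝔭 : I ≤ 𝔭) :
    ∃ n, (I ^ n).map (algebraMap A (Localization.AtPrime 𝔭)) = ⊥ := by
  have hrad : I.map (algebraMap A (Localization.AtPrime 𝔭)) ≤ (⊥ : Ideal _).radical := by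
    rw [← map_bot (f := algebraMap A _),
      IsLocalization.AtPrime.radical_map_of_mem_minimalPrimes
        (A := Localization.AtPrime 𝔭) 𝔭 ⊥ h𝔭]
    exact map_mono hI𝔭
  obtain ⟨n, hn⟩ := exists_pow_le_of_le_radical_of_fg hrad (hI.map _)
  exact ⟨n, by rw [Ideal.map_pow]; exact le_bot_iff.mp hn⟩

theorem exists_notMem_forall_pow_mul_eq_zero_of_le_mem_minimalPrimes {I 𝔭 : Ideal A}
    (hI : I.FG) (h𝔭 : 𝔭 ∈ minimalPrimes A) (hI𝔭 : I ≤ 𝔭) :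
    ∃ s ∉ 𝔭, ∃ n : ℕ, ∀ x ∈ I ^ n, x * s = 0 := by
  have := h𝔭.isPrime
  obtain ⟨n, hn⟩ := exists_pow_map_eq_bot_of_le_mem_minimalPrimes hI h𝔭 hI𝔭
  obtain ⟨s, hs𝔭, hs⟩ :=
    exists_notMem_forall_mul_eq_zero_of_map_eq_bot (Submodule.FG.pow hI n) hn
  exact ⟨s, hs𝔭, n, hs⟩

end Ideal

/-- Let `A` be a commutative ring and `𝔭` a minimal prime of `A`.  If `A` is `1`-deep with
respect to a family `Φ` of finitely generated admissible ideals (i.e. `A` has no nonzero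
`I`-torsion for any admissible `I`), then `𝔭` contains no admissible ideal. -/
theorem PhiRing.not_le_minimalPrime_of_oneDeep
    {A : Type*} [CommRing A] (Φ : PhiRing A)
    (hdeep : ∀ I ∈ Φ.adm, ∀ a : A, (∃ n : ℕ, ∀ x ∈ I ^ n, x * a = 0) → a = 0)
    (𝔭 : Ideal A) (h𝔭 : 𝔭 ∈ minimalPrimes A) :
    ∀ I ∈ Φ.adm, ¬ I ≤ 𝔭 := by
  intro I hI hI𝔭
  obtain ⟨s, hs𝔭, hs⟩ :=
    Ideal.exists_notMem_forall_pow_mul_eq_zero_of_le_mem_minimalPrimes (Φ.fg_of_mem I hI) h𝔭 hI𝔭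
  exact hs𝔭 (hdeep I hI s hs ▸ 𝔭.zero_mem)
end

section
/- Let B be a local ring and R a valuation subring of its residue field κ. Let A be the preimage of R under the quotient map B → κ, and declare an ideal of A admissible if it is generated by an element of A that is invertible in B. Then A is Φ-local: A is a local ring and every admissible ideal of A is invertible. -/
/-!
The residue map restricts to a ring map `A → R` that reflects units: if the residue of `a ∈ A`
is invertible in `R`, then `a` is a unit of `B` whose inverse has residue in `R`, so lies in `A`.
Hence `A` is local because `R` is, being a valuation ring. An admissible generator is a unit of
`B`, so a nonzerodivisor of `B`, hence of `A ⊆ B`.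
-/

open IsLocalRing

theorem Subring.isLocalRing_of_mem_or_inv_mem {K : Type*} [Field K] (S : Subring K)
    (hS : ∀ x : K, x ≠ 0 → x ∈ S ∨ x⁻¹ ∈ S) : IsLocalRing S :=
  let V : ValuationSubring K :=
    ⟨S, fun x => (eq_or_ne x 0).elim (fun hx => .inl (hx ▸ S.zero_mem)) (hS x)⟩
  V.isLocalRing

theorem Subring.isLocalHom_restrict_comap {B C : Type*} [Ring B] [Ring C] (f : B →+* C)
    [IsLocalHom f] (S : Subring C) :
    IsLocalHom (f.restrict (S.comap f) S fun _ h => h) where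
  map_nonunit a ha := by
    obtain ⟨v, hv⟩ := ha
    have hfa : f a = ((v : S) : C) := (congrArg Subtype.val hv).symm
    obtain ⟨u, hu⟩ := isUnit_of_map_unit f (a : B) (hfa ▸ v.isUnit.map S.subtype)
    have hinv : f ↑u⁻¹ = ((↑v⁻¹ : S) : C) := left_inv_eq_right_inv (a := f a)
      (by rw [← hu, ← map_mul, u.inv_mul, map_one])
      (by rw [hfa, ← S.coe_mul, v.mul_inv, S.coe_one])
    refine ⟨⟨a, ⟨_, show f ↑u⁻¹ ∈ S from hinv ▸ Subtype.prop _⟩, ?_, ?_⟩, rfl⟩ <;>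
      exact Subtype.ext (by simp [← hu])

theorem Subring.isLocalRing_comap {B C : Type*} [Ring B] [Ring C] (f : B →+* C) [IsLocalHom f]
    (S : Subring C) [IsLocalRing S] : IsLocalRing (S.comap f) :=
  have := S.isLocalHom_restrict_comap f
  (f.restrict (S.comap f) S fun _ h => h).domain_isLocalRing

/-- Let `B` be a local ring and `R` a valuation subring of its residue field `κ`.  Let `A`
be the preimage of `R` under `B → κ`, an ideal of `A` being *admissible* if it is generated
by an element of `A` invertible in `B`.  Then `A` is `Φ`-local: `A` is a local ring and
every admissible ideal of `A` is invertible (being principal, this means that it is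
generated by a nonzerodivisor). -/
theorem isPhiLocal_preimage_valuation_subring
    (B : Type*) [CommRing B] [IsLocalRing B]
    (R : Subring (IsLocalRing.ResidueField B))
    (hR : ∀ x : IsLocalRing.ResidueField B, x ≠ 0 → x ∈ R ∨ x⁻¹ ∈ R) :
    IsLocalRing ↥(R.comap (IsLocalRing.residue B)) ∧
      ∀ I : Ideal ↥(R.comap (IsLocalRing.residue B)),
        (∃ a : ↥(R.comap (IsLocalRing.residue B)), IsUnit (a : B) ∧ I = Ideal.span {a}) →
        ∃ b : ↥(R.comap (IsLocalRing.residue B)),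
          b ∈ nonZeroDivisors ↥(R.comap (IsLocalRing.residue B)) ∧ I = Ideal.span {b} := by
  have := R.isLocalRing_of_mem_or_inv_mem hR
  refine ⟨R.isLocalRing_comap (residue B), ?_⟩
  rintro I ⟨a, ha, rfl⟩
  exact ⟨a, mem_nonZeroDivisors_of_injective (f := (R.comap (residue B)).subtype) Subtype.val_injective ha.mem_nonZeroDivisors, rfl⟩
end
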